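/- arXiv:2306.14878 — 2 statements merged into one kernel-verified Lean document; each statement's English description precedes it below -/
import Mathlib

section
/- Let d ≥ 1, let x, y ∈ ℝ^d, and let σ > 0. Then there exists a coupling π of the Gaussian measures N(x, σ²I_d) and N(y, σ²I_d) (a probability measure on ℝ^d × ℝ^d whose first marginal is N(x, σ²I_d) and whose second marginal is N(y, σ²I_d)) such that π({(u, v) : u = v}) = 2Q(‖x − y‖/(2σ)). -/
open MeasureTheory ProbabilityTheory Real Set

/-- Standard Gaussian tail probability `Q(r) = P(X ≥ r)` for `X ~ N(0,1)`. -/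
noncomputable def gaussQ (r : ℝ) : ℝ :=
  ((gaussianReal 0 1) {x : ℝ | r ≤ x}).toReal

/-- Gaussian measure `N(m, v·I_d)` on `ℝ^d` (`v` a real variance, clamped at `0`). -/
noncomputable def gaussianE (d : ℕ) (m : EuclideanSpace ℝ (Fin d)) (v : ℝ) :
    Measure (EuclideanSpace ℝ (Fin d)) :=
  (Measure.pi fun i => gaussianReal (m i) v.toNNReal).map
    (MeasurableEquiv.toLp 2 (Fin d → ℝ))

open scoped ENNReal NNReal

lemma aux_lmarginal_prod {ι : Type*} [Fintype ι] [DecidableEq ι] {α : ι → Type*}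
    [∀ i, MeasurableSpace (α i)] (μ : ∀ i, Measure (α i)) [∀ i, SigmaFinite (μ i)]
    (f : ∀ i, α i → ℝ≥0∞) (hf : ∀ i, Measurable (f i)) (s : Finset ι) :
    ∀ x, (∫⋯∫⁻_s, (fun w => ∏ i ∈ s, f i (w i)) ∂μ) x = ∏ i ∈ s, ∫⁻ t, f i t ∂μ i := by
  induction s using Finset.induction_on with
  | empty => intro x; simp
  | @insert i s hi ih =>
    intro x
    have hmeas : Measurable fun w : ∀ j, α j => ∏ j ∈ s, f j (w j) :=
      Finset.measurable_prod _ fun j _ => (hf j).comp (measurable_pi_apply j)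
    have step : (fun w : ∀ j, α j => ∏ j ∈ insert i s, f j (w j))
        = fun w => f i (w i) * ∏ j ∈ s, f j (w j) := by
      funext w; exact Finset.prod_insert hi
    rw [step, lmarginal_insert (fun w => f i (w i) * ∏ j ∈ s, f j (w j))
      (by exact ((hf i).comp (measurable_pi_apply i)).mul hmeas) hi]
    have inner : ∀ xi : α i,
        (∫⋯∫⁻_s, (fun w => f i (w i) * ∏ j ∈ s, f j (w j)) ∂μ) (Function.update x i xi)
          = f i xi * ∏ j ∈ s, ∫⁻ t, f j t ∂μ j := by
      intro xi
      have hcoord : ∀ z : (j : {x // x ∈ s}) → α j,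
          Function.updateFinset (Function.update x i xi) s z i = xi := by
        intro z
        simp only [Function.updateFinset, hi, dif_neg, Function.update_self]
        simp
      have h1 : (∫⋯∫⁻_s, (fun w => f i (w i) * ∏ j ∈ s, f j (w j)) ∂μ) (Function.update x i xi)
          = f i xi * (∫⋯∫⁻_s, (fun w => ∏ j ∈ s, f j (w j)) ∂μ) (Function.update x i xi) := by
        simp only [lmarginal]
        simp only [hcoord]
        exact lintegral_const_mul _ (by exact hmeas.comp measurable_updateFinset)
      rw [h1, ih]
    rw [lintegral_congr inner, lintegral_mul_const _ (hf i), Finset.prod_insert hi]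

lemma aux_lintegral_pi_prod {ι : Type*} [Fintype ι] [DecidableEq ι] {α : ι → Type*}
    [∀ i, MeasurableSpace (α i)] [∀ i, Inhabited (α i)] (μ : ∀ i, Measure (α i))
    [∀ i, SigmaFinite (μ i)] (f : ∀ i, α i → ℝ≥0∞) (hf : ∀ i, Measurable (f i)) :
    ∫⁻ w, ∏ i, f i (w i) ∂Measure.pi μ = ∏ i, ∫⁻ t, f i t ∂μ i := by
  rw [lintegral_eq_lmarginal_univ (fun i => default)]
  exact aux_lmarginal_prod μ f hf Finset.univ _

lemma aux_pi_map {ι : Type*} [Fintype ι] {α β : ι → Type*} [∀ i, MeasurableSpace (α i)]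
    [∀ i, MeasurableSpace (β i)] (μ : ∀ i, Measure (α i)) [∀ i, IsProbabilityMeasure (μ i)]
    (g : ∀ i, α i → β i) (hg : ∀ i, Measurable (g i)) :
    (Measure.pi μ).map (fun w i => g i (w i)) = Measure.pi (fun i => (μ i).map (g i)) := by
  have hF : Measurable fun (w : ∀ i, α i) i => g i (w i) :=
    measurable_pi_lambda _ fun i => (hg i).comp (measurable_pi_apply i)
  haveI : ∀ i, IsProbabilityMeasure ((μ i).map (g i)) :=
    fun i => Measure.isProbabilityMeasure_map (hg i).aemeasurable
  refine (Measure.pi_eq fun s hs => ?_).symm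
  rw [Measure.map_apply hF (MeasurableSet.univ_pi hs)]
  have hpre : (fun w i => g i (w i)) ⁻¹' Set.pi univ s = Set.pi univ (fun i => g i ⁻¹' s i) := by
    ext w; simp [Set.mem_pi]
  rw [hpre, Measure.pi_pi]
  exact Finset.prod_congr rfl fun i _ => (Measure.map_apply (hg i) (hs i)).symm

lemma aux_pi_withDensity {ι : Type*} [Fintype ι] [DecidableEq ι] (f : ι → ℝ → ℝ≥0∞)
    (hf : ∀ i, Measurable (f i))
    [∀ i, SigmaFinite ((volume : Measure ℝ).withDensity (f i))] :
    Measure.pi (fun i => (volume : Measure ℝ).withDensity (f i)) =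
      (Measure.pi fun _ : ι => (volume : Measure ℝ)).withDensity (fun w => ∏ i, f i (w i)) := by
  refine Measure.pi_eq fun s hs => ?_
  rw [withDensity_apply _ (MeasurableSet.univ_pi hs),
    ← lintegral_indicator (MeasurableSet.univ_pi hs) (fun w => ∏ i, f i (w i))]
  have hind : ∀ w : ι → ℝ, (Set.pi univ s).indicator (fun w => ∏ i, f i (w i)) w
      = ∏ i, (s i).indicator (f i) (w i) := by
    intro w
    by_cases hw : w ∈ Set.pi univ s
    · rw [Set.indicator_of_mem hw]
      exact Finset.prod_congr rfl fun i _ =>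
        (Set.indicator_of_mem (hw i (Set.mem_univ i)) (f i)).symm
    · rw [Set.indicator_of_notMem hw]
      have := Set.mem_univ_pi.not.mp hw
      push_neg at this
      obtain ⟨i, hi⟩ := this
      exact (Finset.prod_eq_zero (Finset.mem_univ i)
        (Set.indicator_of_notMem hi (f i))).symm
  rw [lintegral_congr hind, aux_lintegral_pi_prod _ _ fun i => (hf i).indicator (hs i)]
  refine Finset.prod_congr rfl fun i _ => ?_
  rw [lintegral_indicator (hs i), withDensity_apply _ (hs i)]

lemma aux_map_withDensity_equiv {α β : Type*} [MeasurableSpace α] [MeasurableSpace β] (e : α ≃ᵐ β)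
    (μ : Measure α) {g : β → ℝ≥0∞} (hg : Measurable g) :
    (μ.withDensity (g ∘ e)).map e = (μ.map e).withDensity g := by
  ext s hs
  rw [Measure.map_apply e.measurable hs, withDensity_apply _ hs,
    withDensity_apply _ (e.measurable hs), setLIntegral_map hs hg e.measurable]
  rfl

section GaussE

variable {d : ℕ} {σ : ℝ}

lemma aux_gaussE_prob (d : ℕ) (m : EuclideanSpace ℝ (Fin d)) (v : ℝ) :
    IsProbabilityMeasure (gaussianE d m v) := by
  unfold gaussianE
  exact Measure.isProbabilityMeasure_map (MeasurableEquiv.measurable _).aemeasurable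

/-- density representation -/
lemma aux_gaussE_eq (d : ℕ) (m : EuclideanSpace ℝ (Fin d)) (hσ : 0 < σ) :
    gaussianE d m (σ ^ 2) =
      (volume : Measure (EuclideanSpace ℝ (Fin d))).withDensity
        (fun u => ∏ i, gaussianPDF (m i) (σ ^ 2).toNNReal (u i)) := by
  have hv : (σ ^ 2).toNNReal ≠ 0 :=
    ne_of_gt (Real.toNNReal_pos.mpr (by positivity))
  have hpdf : ∀ i : Fin d, Measurable (gaussianPDF (m i) (σ ^ 2).toNNReal) :=
    fun i => measurable_gaussianPDF _ _
  have h1 : ∀ i : Fin d, gaussianReal (m i) (σ ^ 2).toNNReal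
      = (volume : Measure ℝ).withDensity (gaussianPDF (m i) (σ ^ 2).toNNReal) := by
    intro i
    rw [gaussianReal_of_var_ne_zero _ hv]
  unfold gaussianE
  rw [← MeasurableEquiv.symm_symm (MeasurableEquiv.toLp 2 (Fin d → ℝ))]
  have h2 : (Measure.pi fun i => gaussianReal (m i) (σ ^ 2).toNNReal)
      = (Measure.pi fun _ : Fin d => (volume : Measure ℝ)).withDensity
          (fun w => ∏ i, gaussianPDF (m i) (σ ^ 2).toNNReal (w i)) := by
    haveI : ∀ i : Fin d, SigmaFinite
        ((volume : Measure ℝ).withDensity (gaussianPDF (m i) (σ ^ 2).toNNReal)) := by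
      intro i; rw [← h1 i]; infer_instance
    rw [show (fun i : Fin d => gaussianReal (m i) (σ ^ 2).toNNReal)
        = fun i => (volume : Measure ℝ).withDensity (gaussianPDF (m i) (σ ^ 2).toNNReal)
        from funext h1]
    exact aux_pi_withDensity _ hpdf
  rw [h2]
  set e := (MeasurableEquiv.toLp 2 (Fin d → ℝ)).symm
  have h3 : (fun w : Fin d → ℝ => ∏ i, gaussianPDF (m i) (σ ^ 2).toNNReal (w i))
      = (fun u : EuclideanSpace ℝ (Fin d) => ∏ i, gaussianPDF (m i) (σ ^ 2).toNNReal (u i)) ∘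
        e.symm := rfl
  have hG : Measurable (fun u : EuclideanSpace ℝ (Fin d) =>
      ∏ i, gaussianPDF (m i) (σ ^ 2).toNNReal (u i)) := by
    refine Finset.measurable_prod _ fun i _ => ?_
    exact (hpdf i).comp ((measurable_pi_apply i).comp e.measurable)
  rw [h3, aux_map_withDensity_equiv e.symm _ hG]
  congr 1
  exact (MeasurePreserving.symm _ (EuclideanSpace.volume_preserving_symm_measurableEquiv_toLp (Fin d))).map_eq

lemma aux_gaussE_density_zero (d : ℕ) (hσ : 0 < σ) (u : EuclideanSpace ℝ (Fin d)) :
    ∏ i, gaussianPDF (0 : ℝ) (σ ^ 2).toNNReal (u i)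
      = ENNReal.ofReal ((Real.sqrt (2 * π * ((σ ^ 2).toNNReal : ℝ)))⁻¹ ^ d
          * Real.exp (-‖u‖ ^ 2 / (2 * ((σ ^ 2).toNNReal : ℝ)))) := by
  simp only [gaussianPDF, gaussianPDFReal]
  rw [← ENNReal.ofReal_prod_of_nonneg]
  swap
  · intro i _
    positivity
  congr 1
  rw [Finset.prod_mul_distrib, Finset.prod_const, ← Real.exp_sum]
  congr 2
  · simp [Finset.card_univ]
  rw [← Finset.sum_div]
  congr 1
  have hnorm : ‖u‖ ^ 2 = ∑ i, (u i) ^ 2 := by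
    rw [EuclideanSpace.norm_eq, Real.sq_sqrt (by positivity)]
    refine Finset.sum_congr rfl fun i _ => ?_
    rw [Real.norm_eq_abs, sq_abs]
  rw [hnorm, ← Finset.sum_neg_distrib]
  exact Finset.sum_congr rfl fun i _ => by ring

end GaussE

section Invariance

variable {d : ℕ} {σ : ℝ}

lemma aux_gaussE_rot (d : ℕ) (hσ : 0 < σ) (R : EuclideanSpace ℝ (Fin d) ≃ₗᵢ[ℝ] EuclideanSpace ℝ (Fin d)) :
    (gaussianE d 0 (σ ^ 2)).map R = gaussianE d 0 (σ ^ 2) := by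
  rw [aux_gaussE_eq d 0 hσ]
  set G : EuclideanSpace ℝ (Fin d) → ℝ≥0∞ := fun u =>
    ENNReal.ofReal ((Real.sqrt (2 * π * ((σ ^ 2).toNNReal : ℝ)))⁻¹ ^ d
      * Real.exp (-‖u‖ ^ 2 / (2 * ((σ ^ 2).toNNReal : ℝ)))) with hGdef
  have hdens : (fun u : EuclideanSpace ℝ (Fin d) =>
      ∏ i, gaussianPDF ((0 : EuclideanSpace ℝ (Fin d)) i) (σ ^ 2).toNNReal (u i)) = G := by
    funext u
    have : ∀ i : Fin d, (0 : EuclideanSpace ℝ (Fin d)) i = (0 : ℝ) := fun i => rfl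
    simp_rw [this]
    exact aux_gaussE_density_zero d hσ u
  rw [hdens]
  have hGmeas : Measurable G := by
    apply Measurable.ennreal_ofReal
    apply Measurable.const_mul
    exact (measurable_norm.pow_const 2).neg.div_const _ |>.exp
  have hcomp : G ∘ R = G := by
    funext u
    simp only [Function.comp_apply, hGdef, R.norm_map]
  calc (volume.withDensity G).map R
      = ((volume.withDensity (G ∘ R.toMeasurableEquiv)).map R.toMeasurableEquiv : Measure _) := by
        have : G ∘ ⇑R.toMeasurableEquiv = G := hcomp
        rw [this]; rfl
    _ = (volume.map R.toMeasurableEquiv).withDensity G :=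
        aux_map_withDensity_equiv R.toMeasurableEquiv volume hGmeas
    _ = volume.withDensity G := by
        rw [show (volume : Measure (EuclideanSpace ℝ (Fin d))).map R.toMeasurableEquiv
            = volume from R.measurePreserving.map_eq]

lemma aux_gaussE_trans (d : ℕ) (m z : EuclideanSpace ℝ (Fin d)) (v : ℝ) :
    (gaussianE d m v).map (· + z) = gaussianE d (m + z) v := by
  unfold gaussianE
  rw [← MeasurableEquiv.symm_symm (MeasurableEquiv.toLp 2 (Fin d → ℝ))]
  set e := (MeasurableEquiv.toLp 2 (Fin d → ℝ)).symm
  haveI : ∀ i : Fin d, IsProbabilityMeasure (gaussianReal (m i) v.toNNReal) :=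
    fun i => inferInstance
  rw [Measure.map_map (by exact (continuous_id.add continuous_const).measurable)
    e.symm.measurable]
  have hcomm : ((· + z) ∘ e.symm : (Fin d → ℝ) → EuclideanSpace ℝ (Fin d))
      = e.symm ∘ (fun w i => w i + z i) := rfl
  rw [hcomm, ← Measure.map_map e.symm.measurable
    (measurable_pi_lambda _ fun i => (measurable_pi_apply i).add_const _)]
  rw [aux_pi_map _ (fun i => (· + z i)) (fun i => measurable_id.add_const _)]
  congr 1
  refine congrArg Measure.pi (funext fun i => ?_)
  rw [gaussianReal_map_add_const (z i)]
  rfl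

lemma aux_gaussE_affine (d : ℕ) (hσ : 0 < σ)
    (R : EuclideanSpace ℝ (Fin d) ≃ₗᵢ[ℝ] EuclideanSpace ℝ (Fin d))
    (m z : EuclideanSpace ℝ (Fin d)) :
    (gaussianE d m (σ ^ 2)).map (fun u => R u + z) = gaussianE d (R m + z) (σ ^ 2) := by
  have hm : gaussianE d m (σ ^ 2) = (gaussianE d 0 (σ ^ 2)).map (· + m) := by
    rw [aux_gaussE_trans d 0 m, zero_add]
  rw [hm, Measure.map_map (by exact ((R.continuous.comp continuous_id).add continuous_const).measurable)
    (by exact (continuous_id.add continuous_const).measurable)]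
  have h1 : ((fun u => R u + z) ∘ (· + m) : EuclideanSpace ℝ (Fin d) → EuclideanSpace ℝ (Fin d))
      = (fun u => u + (R m + z)) ∘ (R : EuclideanSpace ℝ (Fin d) → EuclideanSpace ℝ (Fin d)) := by
    funext u
    simp only [Function.comp_apply, map_add]
    abel
  rw [h1, ← Measure.map_map (by exact (continuous_id.add continuous_const).measurable)
    R.continuous.measurable,
    aux_gaussE_rot d hσ R, aux_gaussE_trans d 0 (R m + z), zero_add]

end Invariance

section OneD

variable {σ : ℝ}

lemma aux_tail (hσ : 0 < σ) (a : ℝ) :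
    gaussianReal 0 (σ ^ 2).toNNReal (Ici a) = gaussianReal 0 1 (Ici (a / σ)) := by
  have hmap := gaussianReal_map_const_mul (μ := 0) (v := 1) σ
  have hveq : NNReal.mk (σ ^ 2) (sq_nonneg σ) * 1 = (σ ^ 2).toNNReal := by
    ext
    simp [Real.coe_toNNReal _ (sq_nonneg σ)]
  rw [hveq, mul_zero] at hmap
  rw [← hmap, Measure.map_apply (measurable_const_mul σ) measurableSet_Ici]
  congr 1
  ext t
  simp only [mem_preimage, mem_Ici]
  rw [div_le_iff₀ hσ, mul_comm]

lemma aux_sym {v : ℝ≥0} (a : ℝ) :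
    gaussianReal 0 v (Iic (-a)) = gaussianReal 0 v (Ici a) := by
  have hmap := gaussianReal_map_const_mul (μ := 0) (v := v) (-1)
  have hveq : NNReal.mk ((-1 : ℝ) ^ 2) (sq_nonneg (-1 : ℝ)) = 1 := by
    ext; norm_num
  rw [hveq, one_mul, mul_zero] at hmap
  conv_rhs => rw [← hmap]
  rw [Measure.map_apply (measurable_const_mul (-1)) measurableSet_Ici]
  congr 1
  ext t
  simp only [mem_preimage, mem_Ici, mem_Iic]
  constructor <;> intro h <;> linarith

lemma aux_Ioi {v : ℝ≥0} (hv : v ≠ 0) (a : ℝ) :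
    gaussianReal 0 v (Ioi a) = gaussianReal 0 v (Ici a) := by
  refine le_antisymm (measure_mono Ioi_subset_Ici_self) ?_
  have h0 : gaussianReal 0 v {a} = 0 :=
    gaussianReal_absolutelyContinuous 0 hv Real.volume_singleton
  calc gaussianReal 0 v (Ici a) ≤ gaussianReal 0 v (Ioi a ∪ {a}) := by
        refine measure_mono fun t ht => ?_
        rcases eq_or_lt_of_le (mem_Ici.mp ht) with h | h
        · exact Or.inr (by simp [h.symm])
        · exact Or.inl h
    _ ≤ gaussianReal 0 v (Ioi a) + gaussianReal 0 v {a} := measure_union_le _ _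
    _ = gaussianReal 0 v (Ioi a) := by rw [h0, add_zero]

lemma aux_oneD (hσ : 0 < σ) (c : ℝ) (hc : 0 ≤ c) :
    ∃ κ : Measure (ℝ × ℝ), IsProbabilityMeasure κ ∧
      κ.map Prod.fst = gaussianReal c (σ ^ 2).toNNReal ∧
      κ.map Prod.snd = gaussianReal 0 (σ ^ 2).toNNReal ∧
      κ {p : ℝ × ℝ | p.1 = p.2} = 2 * (gaussianReal 0 1) (Ici (c / (2 * σ))) := by
  set v : ℝ≥0 := (σ ^ 2).toNNReal with hvdef
  have hv : v ≠ 0 := ne_of_gt (Real.toNNReal_pos.mpr (by positivity))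
  have hvcoe : (v : ℝ) = σ ^ 2 := Real.coe_toNNReal _ (sq_nonneg σ)
  have hvpos : (0 : ℝ) < v := by rw [hvcoe]; positivity
  set f : ℝ → ℝ≥0∞ := gaussianPDF c v with hfdef
  set g : ℝ → ℝ≥0∞ := gaussianPDF 0 v with hgdef
  have hfm : Measurable f := measurable_gaussianPDF _ _
  have hgm : Measurable g := measurable_gaussianPDF _ _
  set h : ℝ → ℝ≥0∞ := fun t => min (f t) (g t) with hhdef
  have hhm : Measurable h := hfm.min hgm
  -- min characterization
  have hpdfle : ∀ t, t ≤ c / 2 → f t ≤ g t := by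
    intro t ht
    refine ENNReal.ofReal_le_ofReal ?_
    unfold gaussianPDFReal
    refine mul_le_mul_of_nonneg_left ?_ (by positivity)
    rw [Real.exp_le_exp]
    rw [div_le_div_iff_of_pos_right (by positivity)]
    nlinarith
  have hpdfge : ∀ t, c / 2 ≤ t → g t ≤ f t := by
    intro t ht
    refine ENNReal.ofReal_le_ofReal ?_
    unfold gaussianPDFReal
    refine mul_le_mul_of_nonneg_left ?_ (by positivity)
    rw [Real.exp_le_exp]
    rw [div_le_div_iff_of_pos_right (by positivity)]
    nlinarith
  -- measures
  set m : Measure ℝ := volume.withDensity h with hmdef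
  set μ : Measure ℝ := gaussianReal c v with hμdef
  set ν : Measure ℝ := gaussianReal 0 v with hνdef
  have hμd : μ = volume.withDensity f := gaussianReal_of_var_ne_zero c hv
  have hνd : ν = volume.withDensity g := gaussianReal_of_var_ne_zero 0 hv
  set μ' : Measure ℝ := volume.withDensity (fun t => f t - h t) with hμ'def
  set ν' : Measure ℝ := volume.withDensity (fun t => g t - h t) with hν'def
  have hμsplit : μ = m + μ' := by
    rw [hμd, hmdef, hμ'def, ← withDensity_add_left hhm]
    congr 1
    funext t
    exact (add_tsub_cancel_of_le (min_le_left (f t) (g t))).symm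
  have hνsplit : ν = m + ν' := by
    rw [hνd, hmdef, hν'def, ← withDensity_add_left hhm]
    congr 1
    funext t
    exact (add_tsub_cancel_of_le (min_le_right (f t) (g t))).symm
  -- total masses
  haveI : IsProbabilityMeasure μ := by rw [hμdef]; infer_instance
  haveI : IsProbabilityMeasure ν := by rw [hνdef]; infer_instance
  have hμuniv : m univ + μ' univ = 1 := by
    rw [← Measure.add_apply, ← hμsplit, measure_univ]
  have hνuniv : m univ + ν' univ = 1 := by
    rw [← Measure.add_apply, ← hνsplit, measure_univ]
  set p : ℝ≥0∞ := m univ with hpdef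
  set q : ℝ≥0∞ := μ' univ with hqdef
  have hple : p ≤ 1 := by rw [← hμuniv]; exact le_add_right le_rfl
  have hqle : q ≤ 1 := by rw [← hμuniv]; exact le_add_left le_rfl
  have hpne : p ≠ ⊤ := (lt_of_le_of_lt hple ENNReal.one_lt_top).ne
  have hqne : q ≠ ⊤ := (lt_of_le_of_lt hqle ENNReal.one_lt_top).ne
  have hν'q : ν' univ = q := by
    have h1 : p + ν' univ = 1 := hνuniv
    have h2 : p + q = 1 := hμuniv
    have := h1.trans h2.symm
    exact (ENNReal.add_right_inj hpne).mp this
  have hν'ne : ν' univ ≠ ⊤ := by rw [hν'q]; exact hqne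
  haveI : IsFiniteMeasure μ' := ⟨by rw [← hqdef] at *; exact lt_of_le_of_lt hqle ENNReal.one_lt_top⟩
  haveI : IsFiniteMeasure ν' := ⟨lt_of_le_of_lt (hν'q ▸ hqle) ENNReal.one_lt_top⟩
  -- p value
  have hpval : p = 2 * (gaussianReal 0 1) (Ici (c / (2 * σ))) := by
    have hsplit : p = (∫⁻ t in Iic (c/2), h t) + ∫⁻ t in Ioi (c/2), h t := by
      have hac : ∫⁻ t, h t ∂volume
          = (∫⁻ t in Iic (c/2), h t) + ∫⁻ t in (Iic (c/2))ᶜ, h t :=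
        (lintegral_add_compl _ measurableSet_Iic).symm
      rw [compl_Iic] at hac
      rw [hpdef, hmdef, withDensity_apply _ MeasurableSet.univ, Measure.restrict_univ, hac]
    have h1 : ∫⁻ t in Iic (c/2), h t = μ (Iic (c/2)) := by
      rw [hμd, withDensity_apply _ measurableSet_Iic]
      refine setLIntegral_congr_fun measurableSet_Iic (fun t ht => ?_)
      exact min_eq_left (hpdfle t ht)
    have h2 : ∫⁻ t in Ioi (c/2), h t = ν (Ioi (c/2)) := by
      rw [hνd, withDensity_apply _ measurableSet_Ioi]
      refine setLIntegral_congr_fun measurableSet_Ioi (fun t ht => ?_)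
      exact min_eq_right (hpdfge t (le_of_lt ht))
    have h3 : μ (Iic (c/2)) = ν (Ici (c/2)) := by
      have hmap : ν.map (· + c) = μ := by
        rw [hνdef, hμdef, gaussianReal_map_add_const c, zero_add]
      rw [← hmap, Measure.map_apply (measurable_add_const c) measurableSet_Iic]
      have hpre : ((· + c) ⁻¹' Iic (c/2) : Set ℝ) = Iic (-(c/2)) := by
        ext t
        simp only [mem_preimage, mem_Iic, mem_Iic]
        constructor <;> intro ht <;> linarith
      rw [hpre, hνdef]
      exact aux_sym (c/2)
    have h4 : ν (Ioi (c/2)) = ν (Ici (c/2)) := by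
      rw [hνdef]; exact aux_Ioi hv (c/2)
    have h5 : ν (Ici (c/2)) = gaussianReal 0 1 (Ici (c / (2 * σ))) := by
      rw [hνdef, aux_tail hσ (c/2)]
      congr 2
      rw [div_div]
    rw [hsplit, h1, h2, h3, h4, h5]
    exact (two_mul _).symm
  -- absolute continuity for atoms
  have hν'atom : ∀ t : ℝ, ν' {t} = 0 := fun t =>
    withDensity_absolutelyContinuous volume _ Real.volume_singleton
  -- the coupling
  set diag : ℝ → ℝ × ℝ := fun t => (t, t) with hdiagdef
  have hdiagm : Measurable diag := measurable_id.prodMk measurable_id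
  set κ : Measure (ℝ × ℝ) := m.map diag + q⁻¹ • (μ'.prod ν') with hκdef
  have hD : MeasurableSet {p : ℝ × ℝ | p.1 = p.2} :=
    measurableSet_eq_fun measurable_fst measurable_snd
  have hfst : κ.map Prod.fst = μ := by
    rw [hκdef, Measure.map_add _ _ measurable_fst, Measure.map_smul,
      Measure.map_map measurable_fst hdiagm, Measure.map_fst_prod]
    have hid : (Prod.fst ∘ diag : ℝ → ℝ) = id := rfl
    rw [hid, Measure.map_id, hν'q, hμsplit]
    congr 1
    by_cases hq0 : q = 0
    · have : μ' = 0 := by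
        rw [← Measure.measure_univ_eq_zero, ← hqdef, hq0]
      rw [this, hq0]
      simp
    · rw [smul_smul, ENNReal.inv_mul_cancel hq0 hqne, one_smul]
  have hsnd : κ.map Prod.snd = ν := by
    rw [hκdef, Measure.map_add _ _ measurable_snd, Measure.map_smul,
      Measure.map_map measurable_snd hdiagm, Measure.map_snd_prod]
    have hid : (Prod.snd ∘ diag : ℝ → ℝ) = id := rfl
    rw [hid, Measure.map_id, ← hqdef, hνsplit]
    congr 1
    by_cases hq0 : q = 0
    · have : ν' = 0 := by
        rw [← Measure.measure_univ_eq_zero, hν'q, hq0]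
      rw [this, hq0]
      simp
    · rw [smul_smul, ENNReal.inv_mul_cancel hq0 hqne, one_smul]
  have hprob : IsProbabilityMeasure κ := by
    constructor
    have : κ univ = (κ.map Prod.fst) univ := by
      rw [Measure.map_apply measurable_fst MeasurableSet.univ]
      rfl
    rw [this, hfst, measure_univ]
  have hdiagmass : κ {p : ℝ × ℝ | p.1 = p.2} = p := by
    rw [hκdef, Measure.add_apply, Measure.smul_apply, smul_eq_mul]
    have h1 : (m.map diag) {p : ℝ × ℝ | p.1 = p.2} = p := by
      rw [Measure.map_apply hdiagm hD]
      have : (diag ⁻¹' {p : ℝ × ℝ | p.1 = p.2}) = univ := by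
        ext t; simp [hdiagdef]
      rw [this]
    have h2 : (μ'.prod ν') {p : ℝ × ℝ | p.1 = p.2} = 0 := by
      rw [Measure.prod_apply hD]
      have hz : ∀ t : ℝ, ν' (Prod.mk t ⁻¹' {p : ℝ × ℝ | p.1 = p.2}) = 0 := by
        intro t
        have : (Prod.mk t ⁻¹' {p : ℝ × ℝ | p.1 = p.2}) = {t} := by
          ext s
          simp [eq_comm]
        rw [this]
        exact hν'atom t
      simp only [hz]
      exact lintegral_zero
    rw [h1, h2, mul_zero, add_zero]
  exact ⟨κ, hprob, hfst, hsnd, by rw [hdiagmass, hpval]⟩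

end OneD


/-- There is a coupling `π` of `N(x, σ²I_d)` and `N(y, σ²I_d)` with
`π({(u,v) : u = v}) = 2Q(‖x − y‖/(2σ))`. -/
theorem exists_coupling_gaussianE (d : ℕ) (hd : 1 ≤ d) (x y : EuclideanSpace ℝ (Fin d))
    (σ : ℝ) (hσ : 0 < σ) :
    ∃ κ : Measure (EuclideanSpace ℝ (Fin d) × EuclideanSpace ℝ (Fin d)),
      IsProbabilityMeasure κ ∧
      κ.map Prod.fst = gaussianE d x (σ ^ 2) ∧
      κ.map Prod.snd = gaussianE d y (σ ^ 2) ∧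
      (κ {p | p.1 = p.2}).toReal = 2 * gaussQ (‖x - y‖ / (2 * σ)) := by
  classical
  set v : ℝ≥0 := (σ ^ 2).toNNReal with hvdef
  set c : ℝ := ‖x - y‖ with hcdef
  have hc : 0 ≤ c := norm_nonneg _
  have hd0 : 0 < d := hd
  set i0 : Fin d := ⟨0, hd0⟩ with hi0def
  set e₀ : (EuclideanSpace ℝ (Fin d)) := EuclideanSpace.single i0 (1 : ℝ) with he₀def
  have he₀norm : ‖e₀‖ = 1 := by
    rw [he₀def, EuclideanSpace.norm_single, norm_one]
  -- rotation taking c • e₀ to x - y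
  obtain ⟨R, hR⟩ : ∃ R : (EuclideanSpace ℝ (Fin d)) ≃ₗᵢ[ℝ] (EuclideanSpace ℝ (Fin d)), R (c • e₀) = x - y := by
    by_cases hxy : x = y
    · refine ⟨LinearIsometryEquiv.refl ℝ (EuclideanSpace ℝ (Fin d)), ?_⟩
      have hc0 : c = 0 := by rw [hcdef, hxy, sub_self, norm_zero]
      rw [hc0, zero_smul, hxy, sub_self]
      rfl
    · have hnorm : ‖c • e₀‖ = ‖x - y‖ := by
        rw [norm_smul, he₀norm, mul_one, Real.norm_eq_abs, abs_of_nonneg hc]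
      exact ⟨Submodule.reflection (ℝ ∙ (c • e₀ - (x - y)))ᗮ, Submodule.reflection_sub hnorm⟩
  -- 1D maximal coupling
  obtain ⟨κ₁, hκ₁prob, hκ₁f, hκ₁s, hκ₁d⟩ := aux_oneD hσ c hc
  -- coordinatewise couplings
  set gdiag : ℝ → ℝ × ℝ := fun t => (t, t) with hgdiagdef
  have hgdiagm : Measurable gdiag := measurable_id.prodMk measurable_id
  set κs : Fin d → Measure (ℝ × ℝ) := fun i =>
    if i = i0 then κ₁ else (gaussianReal 0 v).map gdiag with hκsdef
  haveI : ∀ i, IsProbabilityMeasure (κs i) := by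
    intro i
    simp only [hκsdef]
    by_cases hi : i = i0
    · rw [if_pos hi]; exact hκ₁prob
    · rw [if_neg hi]; exact Measure.isProbabilityMeasure_map hgdiagm.aemeasurable
  -- marginals coordinatewise
  have hms1 : ∀ i, (κs i).map Prod.fst = gaussianReal ((c • e₀) i) v := by
    intro i
    by_cases hi : i = i0
    · have hcoord : (c • e₀) i = c := by
        subst hi
        rw [he₀def, PiLp.smul_apply, EuclideanSpace.single_apply, if_pos rfl,
          smul_eq_mul, mul_one]
      rw [hcoord]
      simp only [hκsdef]
      simp only [if_pos hi]
      exact hκ₁f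
    · have hcoord : (c • e₀) i = 0 := by
        rw [he₀def, PiLp.smul_apply, EuclideanSpace.single_apply, if_neg hi, smul_zero]
      rw [hcoord]
      simp only [hκsdef]
      simp only [if_neg hi]
      rw [Measure.map_map measurable_fst hgdiagm]
      have : (Prod.fst ∘ gdiag : ℝ → ℝ) = id := rfl
      rw [this, Measure.map_id]
  have hms2 : ∀ i, (κs i).map Prod.snd = gaussianReal ((0 : (EuclideanSpace ℝ (Fin d))) i) v := by
    intro i
    have hcoord : (0 : (EuclideanSpace ℝ (Fin d))) i = 0 := rfl
    rw [hcoord]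
    simp only [hκsdef]
    by_cases hi : i = i0
    · simp only [if_pos hi]; exact hκ₁s
    · simp only [if_neg hi]
      rw [Measure.map_map measurable_snd hgdiagm]
      have : (Prod.snd ∘ gdiag : ℝ → ℝ) = id := rfl
      rw [this, Measure.map_id]
  -- assemble
  set K : Measure (Fin d → ℝ × ℝ) := Measure.pi κs with hKdef
  set e := (MeasurableEquiv.toLp 2 (Fin d → ℝ)).symm
  set Φ : (Fin d → ℝ × ℝ) → (EuclideanSpace ℝ (Fin d)) × (EuclideanSpace ℝ (Fin d)) := fun w =>
    (e.symm (fun i => (w i).1), e.symm (fun i => (w i).2)) with hΦdef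
  have hg1m : Measurable (fun w : Fin d → ℝ × ℝ => fun i => (w i).1) :=
    measurable_pi_lambda _ fun i => measurable_fst.comp (measurable_pi_apply i)
  have hg2m : Measurable (fun w : Fin d → ℝ × ℝ => fun i => (w i).2) :=
    measurable_pi_lambda _ fun i => measurable_snd.comp (measurable_pi_apply i)
  have hΦm : Measurable Φ :=
    ((e.symm.measurable.comp hg1m).prodMk (e.symm.measurable.comp hg2m))
  set T : (EuclideanSpace ℝ (Fin d)) → (EuclideanSpace ℝ (Fin d)) := fun u => R u + y with hTdef
  have hTm : Measurable T := (R.continuous.measurable).add_const y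
  have hTinj : Function.Injective T := by
    intro u w huw
    simp only [hTdef] at huw
    exact R.injective (add_right_cancel huw)
  set κ : Measure ((EuclideanSpace ℝ (Fin d)) × (EuclideanSpace ℝ (Fin d))) := (K.map Φ).map (Prod.map T T) with hκdef
  haveI hKprob : IsProbabilityMeasure K := by rw [hKdef]; infer_instance
  haveI hκΦprob : IsProbabilityMeasure (K.map Φ) := Measure.isProbabilityMeasure_map hΦm.aemeasurable
  have hTTm : Measurable (Prod.map T T) := hTm.prodMap hTm
  haveI hκprob : IsProbabilityMeasure κ := by
    rw [hκdef]; exact Measure.isProbabilityMeasure_map hTTm.aemeasurable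
  -- first marginal
  have hmargfst : (K.map Φ).map Prod.fst = gaussianE d (c • e₀) (σ ^ 2) := by
    rw [Measure.map_map measurable_fst hΦm]
    have hcomp : (Prod.fst ∘ Φ : (Fin d → ℝ × ℝ) → (EuclideanSpace ℝ (Fin d)))
        = e.symm ∘ (fun w i => (w i).1) := rfl
    rw [hcomp, ← Measure.map_map e.symm.measurable hg1m,
      aux_pi_map κs (fun _ => Prod.fst) (fun _ => measurable_fst)]
    unfold gaussianE
    rw [congrArg Measure.pi (funext hms1)]
    rfl
  have hmargsnd : (K.map Φ).map Prod.snd = gaussianE d 0 (σ ^ 2) := by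
    rw [Measure.map_map measurable_snd hΦm]
    have hcomp : (Prod.snd ∘ Φ : (Fin d → ℝ × ℝ) → (EuclideanSpace ℝ (Fin d)))
        = e.symm ∘ (fun w i => (w i).2) := rfl
    rw [hcomp, ← Measure.map_map e.symm.measurable hg2m,
      aux_pi_map κs (fun _ => Prod.snd) (fun _ => measurable_snd)]
    unfold gaussianE
    rw [congrArg Measure.pi (funext hms2)]
    rfl
  refine ⟨κ, hκprob, ?_, ?_, ?_⟩
  · rw [hκdef, Measure.map_map measurable_fst hTTm]
    have : (Prod.fst ∘ Prod.map T T : (EuclideanSpace ℝ (Fin d)) × (EuclideanSpace ℝ (Fin d)) → (EuclideanSpace ℝ (Fin d))) = T ∘ Prod.fst := rfl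
    rw [this, ← Measure.map_map hTm measurable_fst, hmargfst, hTdef,
      aux_gaussE_affine d hσ R (c • e₀) y, hR, sub_add_cancel]
  · rw [hκdef, Measure.map_map measurable_snd hTTm]
    have : (Prod.snd ∘ Prod.map T T : (EuclideanSpace ℝ (Fin d)) × (EuclideanSpace ℝ (Fin d)) → (EuclideanSpace ℝ (Fin d))) = T ∘ Prod.snd := rfl
    rw [this, ← Measure.map_map hTm measurable_snd, hmargsnd, hTdef,
      aux_gaussE_affine d hσ R 0 y, map_zero, zero_add]
  · -- diagonal mass
    have hD : MeasurableSet {p : (EuclideanSpace ℝ (Fin d)) × (EuclideanSpace ℝ (Fin d)) | p.1 = p.2} :=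
      measurableSet_eq_fun measurable_fst measurable_snd
    have hD1 : MeasurableSet {p : ℝ × ℝ | p.1 = p.2} :=
      measurableSet_eq_fun measurable_fst measurable_snd
    have hpre1 : (Prod.map T T) ⁻¹' {p : (EuclideanSpace ℝ (Fin d)) × (EuclideanSpace ℝ (Fin d)) | p.1 = p.2} = {p : (EuclideanSpace ℝ (Fin d)) × (EuclideanSpace ℝ (Fin d)) | p.1 = p.2} := by
      ext p
      simp only [mem_preimage, mem_setOf_eq, Prod.map_apply]
      exact ⟨fun hp => hTinj hp, fun hp => congrArg T hp⟩
    have hpre2 : Φ ⁻¹' {p : (EuclideanSpace ℝ (Fin d)) × (EuclideanSpace ℝ (Fin d)) | p.1 = p.2}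
        = Set.pi univ (fun _ : Fin d => {p : ℝ × ℝ | p.1 = p.2}) := by
      ext w
      simp only [mem_preimage, hΦdef, mem_setOf_eq, mem_univ_pi]
      rw [e.symm.injective.eq_iff, funext_iff]
    have hfac : ∀ i : Fin d, κs i {p : ℝ × ℝ | p.1 = p.2}
        = if i = i0 then 2 * (gaussianReal 0 1) (Ici (c / (2 * σ))) else 1 := by
      intro i
      simp only [hκsdef]
      by_cases hi : i = i0
      · rw [if_pos hi, if_pos hi, hκ₁d]
      · rw [if_neg hi, if_neg hi, Measure.map_apply hgdiagm hD1]
        have : gdiag ⁻¹' {p : ℝ × ℝ | p.1 = p.2} = univ := by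
          ext t; simp [hgdiagdef]
        rw [this, measure_univ]
    have hmass : κ {p : (EuclideanSpace ℝ (Fin d)) × (EuclideanSpace ℝ (Fin d)) | p.1 = p.2}
        = 2 * (gaussianReal 0 1) (Ici (c / (2 * σ))) := by
      rw [hκdef, Measure.map_apply hTTm hD, hpre1, Measure.map_apply hΦm hD, hpre2,
        hKdef, Measure.pi_pi]
      simp only [hfac]
      rw [Finset.prod_ite_eq' Finset.univ i0
        (fun _ => 2 * (gaussianReal 0 1) (Ici (c / (2 * σ))))]
      simp
    rw [hmass, ENNReal.toReal_mul]
    congr 1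
end

section
/- Let d ≥ 1, σ > 0, B > 0, let f : ℝ^d → ℝ^d be Borel measurable, let γ = N(0, σ²I_d), and let μ, ν be Borel probability measures on ℝ^d, both supported in the closed Euclidean ball of radius B/2 centered at the origin. Then TV(f_*(μ ∗ γ), f_*(ν ∗ γ)) ≤ (1 − 2Q(B/(2σ))) · TV(μ, ν). -/
open MeasureTheory ProbabilityTheory Real Set

/-- Total variation distance `TV(μ,ν) = sup_{A measurable} |μ(A) − ν(A)|`. -/
noncomputable def tvDist {α : Type*} [MeasurableSpace α] (μ ν : Measure α) : ℝ :=
  ⨆ s : {s : Set α // MeasurableSet s}, |(μ s.1).toReal - (ν s.1).toReal|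

open scoped ENNReal NNReal RealInnerProductSpace


lemma lintegral_pi_prod : ∀ {n : ℕ} (μ : Measure ℝ) [SigmaFinite μ]
    (f : Fin n → ℝ → ℝ≥0∞), (∀ i, Measurable (f i)) →
    ∫⁻ z, ∏ i, f i (z i) ∂(Measure.pi fun _ => μ) = ∏ i, ∫⁻ t, f i t ∂μ := by
  intro n
  induction n with
  | zero =>
    intro μ _ f hf
    simp only [Finset.univ_eq_empty, Finset.prod_empty, lintegral_one]
    rw [Measure.pi_univ]
    simp
  | succ n ih =>
    intro μ _ f hf
    have hmp := measurePreserving_piFinSuccAbove (fun _ : Fin (n+1) => μ) 0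
    set e := MeasurableEquiv.piFinSuccAbove (fun _ : Fin (n+1) => ℝ) 0 with he
    have h1 : ∫⁻ z, ∏ i, f i (z i) ∂(Measure.pi fun _ => μ)
        = ∫⁻ p, ∏ i, f i (e.symm p i) ∂(μ.prod (Measure.pi fun _ : Fin n => μ)) := by
      rw [← hmp.map_eq, lintegral_map]
      · congr 1; ext z; congr 1; ext i; rw [e.symm_apply_apply]
      · exact Finset.measurable_prod _ fun i _ =>
          (hf i).comp ((measurable_pi_apply i).comp e.symm.measurable)
      · exact e.measurable
    rw [h1]
    have h2 : ∀ p : ℝ × (Fin n → ℝ), ∏ i, f i (e.symm p i)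
        = f 0 p.1 * ∏ i : Fin n, f ((0:Fin (n+1)).succAbove i) (p.2 i) := by
      intro p
      rw [Fin.prod_univ_succAbove _ 0]
      have hsame : e.symm p 0 = p.1 := by
        simp [he, MeasurableEquiv.piFinSuccAbove]
      have habove : ∀ i : Fin n, e.symm p ((0:Fin (n+1)).succAbove i) = p.2 i := by
        intro i; simp [he, MeasurableEquiv.piFinSuccAbove]
      rw [hsame]
      refine congrArg _ (Finset.prod_congr rfl fun i _ => by rw [habove])
    rw [lintegral_congr h2]
    rw [lintegral_prod]
    · have hmeas : Measurable fun y : Fin n → ℝ => ∏ i, f ((0:Fin (n+1)).succAbove i) (y i) :=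
        Finset.measurable_prod _ fun i _ => (hf _).comp (measurable_pi_apply i)
      have : ∀ x : ℝ, ∫⁻ y, f 0 x * ∏ i, f ((0:Fin (n+1)).succAbove i) (y i)
            ∂(Measure.pi fun _ : Fin n => μ)
          = f 0 x * ∫⁻ y, ∏ i, f ((0:Fin (n+1)).succAbove i) (y i)
            ∂(Measure.pi fun _ : Fin n => μ) := fun x => lintegral_const_mul _ hmeas
      rw [lintegral_congr this, lintegral_mul_const _ (hf 0),
        ih _ _ (fun i => hf _), Fin.prod_univ_succAbove _ 0]
    · apply AEMeasurable.mul
      · exact ((hf 0).comp measurable_fst).aemeasurable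
      · exact (Finset.measurable_prod _ fun i _ =>
          (hf _).comp ((measurable_pi_apply i).comp measurable_snd)).aemeasurable

lemma pi_gaussian_eq {n : ℕ} (V : ℝ≥0) (hV : V ≠ 0) (c : Fin n → ℝ) :
    Measure.pi (fun i => gaussianReal (c i) V)
      = (volume : Measure (Fin n → ℝ)).withDensity (fun z => ∏ i, gaussianPDF (c i) V (z i)) := by
  have hf : ∀ i : Fin n, Measurable (gaussianPDF (c i) V) := fun i => measurable_gaussianPDF _ _
  set f : Fin n → ℝ → ℝ≥0∞ := fun i => gaussianPDF (c i) V with hfdef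
  refine (Measure.pi_eq (μ := fun i => gaussianReal (c i) V) fun s hs => ?_)
  rw [withDensity_apply _ (MeasurableSet.univ_pi hs)]
  have : ∫⁻ z in univ.pi s, ∏ i, f i (z i) ∂(volume : Measure (Fin n → ℝ))
      = ∫⁻ z, ∏ i, ((s i).indicator (f i)) (z i) ∂(volume : Measure (Fin n → ℝ)) := by
    rw [← lintegral_indicator (MeasurableSet.univ_pi hs)]
    congr 1
    ext z
    by_cases hz : z ∈ univ.pi s
    · rw [indicator_of_mem hz]
      exact Finset.prod_congr rfl fun i _ => (indicator_of_mem (hz i (mem_univ i)) _).symm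
    · rw [indicator_of_notMem hz]
      rw [mem_univ_pi] at hz
      push_neg at hz
      obtain ⟨i, hi⟩ := hz
      symm
      apply Finset.prod_eq_zero (Finset.mem_univ i)
      rw [indicator_of_notMem hi]
    
  rw [this, volume_pi, lintegral_pi_prod _ _ (fun i => (hf i).indicator (hs i))]
  refine Finset.prod_congr rfl fun i _ => ?_
  rw [lintegral_indicator (hs i), gaussianReal_apply _ hV]


/-- density of the centered Gaussian on Euclidean space, as a function of the norm. -/
noncomputable def gpdf (d : ℕ) (σ : ℝ) (z : EuclideanSpace ℝ (Fin d)) : ℝ≥0∞ :=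
  ENNReal.ofReal ((Real.sqrt (2 * π * σ^2))⁻¹ ^ d * Real.exp (-‖z‖^2 / (2 * σ^2)))

lemma gpdf_measurable (d : ℕ) (σ : ℝ) : Measurable (gpdf d σ) := by
  apply Measurable.ennreal_ofReal
  fun_prop

lemma withDensity_map_equiv {α β : Type*} [MeasurableSpace α] [MeasurableSpace β]
    (μ : Measure α) (ν : Measure β) (φ : α ≃ᵐ β) (h : MeasurePreserving φ μ ν)
    (p : α → ℝ≥0∞) (hp : Measurable p) :
    (μ.withDensity p).map φ = ν.withDensity (p ∘ φ.symm) := by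
  ext s hs
  rw [Measure.map_apply φ.measurable hs, withDensity_apply _ (φ.measurable hs),
    withDensity_apply _ hs, ← h.map_eq,
    setLIntegral_map hs (hp.comp φ.symm.measurable) φ.measurable]
  congr 1
  ext z
  simp

lemma norm_sq_eq_sum_sq (d : ℕ) (z : EuclideanSpace ℝ (Fin d)) : ‖z‖^2 = ∑ i, (z i)^2 := by
  rw [EuclideanSpace.norm_eq, Real.sq_sqrt (by positivity)]
  simp [sq_abs]

lemma gaussianE_eq_withDensity (d : ℕ) {σ : ℝ} (hσ : 0 < σ) :
    gaussianE d 0 (σ^2) = (volume : Measure (EuclideanSpace ℝ (Fin d))).withDensity (gpdf d σ) := by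
  have hV : (σ^2).toNNReal ≠ 0 := by
    simp only [ne_eq, Real.toNNReal_eq_zero, not_le]
    positivity
  have hVc : (((σ^2).toNNReal : ℝ≥0) : ℝ) = σ^2 := Real.coe_toNNReal _ (sq_nonneg σ)
  rw [gaussianE]
  have h0 : (fun i : Fin d => gaussianReal ((0 : EuclideanSpace ℝ (Fin d)) i) (σ^2).toNNReal)
      = fun i => gaussianReal 0 (σ^2).toNNReal := rfl
  rw [h0, pi_gaussian_eq _ hV]
  have hmp : MeasurePreserving (MeasurableEquiv.toLp 2 (Fin d → ℝ))
      (volume : Measure (Fin d → ℝ)) (volume : Measure (EuclideanSpace ℝ (Fin d))) :=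
    (EuclideanSpace.volume_preserving_symm_measurableEquiv_toLp (Fin d)).symm
  rw [withDensity_map_equiv _ _ _ hmp
    (fun z => ∏ i, gaussianPDF 0 (σ^2).toNNReal (z i))
    (Finset.measurable_prod _ fun i _ => (measurable_gaussianPDF _ _).comp (measurable_pi_apply i))]
  congr 1
  ext z
  have hz : ∀ i, ((MeasurableEquiv.toLp 2 (Fin d → ℝ)).symm z) i = z i := fun i => rfl
  simp only [Function.comp_apply]
  rw [gpdf]
  have : ∀ i : Fin d, gaussianPDF 0 ((σ^2).toNNReal)
        (((MeasurableEquiv.toLp 2 (Fin d → ℝ)).symm z) i)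
      = ENNReal.ofReal ((Real.sqrt (2 * π * σ^2))⁻¹ * Real.exp (-(z i)^2 / (2 * σ^2))) := by
    intro i
    rw [hz i, gaussianPDF, gaussianPDFReal, hVc]
    norm_num
  rw [Finset.prod_congr rfl (fun i _ => this i), ← ENNReal.ofReal_prod_of_nonneg
    (fun i _ => by positivity)]
  congr 1
  rw [Finset.prod_mul_distrib, Finset.prod_const, ← Real.exp_sum, Finset.card_univ,
    Fintype.card_fin, norm_sq_eq_sum_sq]
  congr 1
  rw [← Finset.sum_div, ← Finset.sum_neg_distrib]

lemma gaussianE_map_add (d : ℕ) {σ : ℝ} (hσ : 0 < σ) (x : EuclideanSpace ℝ (Fin d)) :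
    (gaussianE d 0 (σ^2)).map (fun z => x + z)
      = (volume : Measure (EuclideanSpace ℝ (Fin d))).withDensity (fun z => gpdf d σ (-x + z)) := by
  rw [gaussianE_eq_withDensity d hσ]
  have := withDensity_map_equiv (volume : Measure (EuclideanSpace ℝ (Fin d))) volume
    (Homeomorph.addLeft x).toMeasurableEquiv (measurePreserving_add_left volume x)
    (gpdf d σ) (gpdf_measurable d σ)
  exact this

lemma gaussianE_map_isometry (d : ℕ) {σ : ℝ} (hσ : 0 < σ)
    (R : EuclideanSpace ℝ (Fin d) ≃ₗᵢ[ℝ] EuclideanSpace ℝ (Fin d)) :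
    (gaussianE d 0 (σ^2)).map R = gaussianE d 0 (σ^2) := by
  rw [gaussianE_eq_withDensity d hσ]
  have := withDensity_map_equiv (volume : Measure (EuclideanSpace ℝ (Fin d))) volume
    R.toHomeomorph.toMeasurableEquiv R.measurePreserving (gpdf d σ) (gpdf_measurable d σ)
  rw [show ⇑R = ⇑R.toHomeomorph.toMeasurableEquiv from rfl, this]
  congr 1
  ext z
  simp only [Function.comp_apply, gpdf]
  congr 3
  rw [show R.toHomeomorph.toMeasurableEquiv.symm z = R.symm z from rfl]
  rw [R.symm.norm_map]

lemma inner_measurable (d : ℕ) (u : EuclideanSpace ℝ (Fin d)) :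
    Measurable (fun z : EuclideanSpace ℝ (Fin d) => ⟪z, u⟫) :=
  (continuous_id.inner continuous_const).measurable

lemma gaussianE_halfspace (d : ℕ) (hd : 0 < d) {σ : ℝ} (hσ : 0 < σ)
    (u : EuclideanSpace ℝ (Fin d)) (hu : ‖u‖ = 1) (t : ℝ) :
    gaussianE d 0 (σ^2) {z | ⟪z, u⟫ ≤ t} = gaussianReal 0 1 (Iic (t/σ)) := by
  classical
  set j0 : Fin d := ⟨0, hd⟩
  set e0 : EuclideanSpace ℝ (Fin d) := EuclideanSpace.single j0 (1:ℝ) with he0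
  have he0n : ‖e0‖ = 1 := by rw [he0, EuclideanSpace.norm_single]; norm_num
  set R := Submodule.reflection (ℝ ∙ (u - e0))ᗮ with hR
  have hRu : R u = e0 := Submodule.reflection_sub (by rw [hu, he0n])
  have hRe0 : R e0 = u := by
    have := Submodule.reflection_reflection (ℝ ∙ (u - e0))ᗮ u
    rw [hRu] at this
    exact this
  have hSmeas : MeasurableSet {z : EuclideanSpace ℝ (Fin d) | ⟪z, u⟫ ≤ t} :=
    (inner_measurable d u) measurableSet_Iic
  have h1 : gaussianE d 0 (σ^2) {z | ⟪z, u⟫ ≤ t}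
      = gaussianE d 0 (σ^2) {z | z j0 ≤ t} := by
    conv_lhs => rw [← gaussianE_map_isometry d hσ R]
    rw [Measure.map_apply R.continuous.measurable hSmeas]
    congr 1
    ext z
    simp only [mem_preimage, mem_setOf_eq]
    have : ⟪R z, u⟫ = ⟪z, e0⟫ := by
      conv_lhs => rw [← hRe0]
      exact R.inner_map_map z e0
    rw [this]
    have hz : ⟪z, e0⟫ = z j0 := by simp [he0, EuclideanSpace.inner_single_right]
    rw [hz]
  rw [h1, gaussianE]
  have hpre : (MeasurableEquiv.toLp 2 (Fin d → ℝ)) ⁻¹' {z | z j0 ≤ t}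
      = univ.pi (Function.update (fun _ : Fin d => (univ : Set ℝ)) j0 (Iic t)) := by
    ext w
    simp only [mem_preimage, mem_setOf_eq, mem_univ_pi, Function.update_apply]
    constructor
    · intro h i
      by_cases hi : i = j0
      · simp [hi]; exact h
      · simp [hi]
    · intro h
      have := h j0
      simpa using this
  rw [Measure.map_apply (MeasurableEquiv.toLp 2 (Fin d → ℝ)).measurable
    (by exact ((measurable_pi_apply j0).comp (MeasurableEquiv.toLp 2 (Fin d → ℝ)).symm.measurable) measurableSet_Iic), hpre, Measure.pi_pi]
  have hprod : ∏ i, gaussianReal ((0 : EuclideanSpace ℝ (Fin d)) i) (σ^2).toNNReal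
      (Function.update (fun _ : Fin d => (univ : Set ℝ)) j0 (Iic t) i)
      = gaussianReal 0 (σ^2).toNNReal (Iic t) := by
    rw [Finset.prod_eq_single j0]
    · simp
    · intro i _ hi
      rw [Function.update_apply]
      simp [hi]
    · simp
  rw [hprod]
  have hmap : gaussianReal 0 (σ^2).toNNReal = (gaussianReal 0 1).map (fun r => σ * r) := by
    rw [gaussianReal_map_const_mul σ]
    congr 1
    · ring
    · ext
      simp only [NNReal.coe_mul, NNReal.coe_mk, NNReal.coe_one, mul_one]
      rw [Real.coe_toNNReal _ (sq_nonneg σ)]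
  rw [hmap, Measure.map_apply (measurable_const_mul σ) measurableSet_Iic]
  congr 1
  ext r
  simp only [mem_preimage, mem_Iic]
  rw [le_div_iff₀ hσ, mul_comm]

lemma std_singleton (r : ℝ) : gaussianReal 0 1 {r} = 0 :=
  gaussianReal_absolutelyContinuous 0 one_ne_zero (volume_singleton)

lemma std_neg_map : (gaussianReal 0 1).map (fun x : ℝ => (-1) * x) = gaussianReal 0 1 := by
  rw [gaussianReal_map_const_mul (-1)]
  congr 1
  · ring
  · ext; norm_num

lemma std_Iic_neg (r : ℝ) : gaussianReal 0 1 (Iic (-r)) = gaussianReal 0 1 (Ici r) := by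
  conv_lhs => rw [← std_neg_map]
  rw [Measure.map_apply (measurable_const_mul (-1)) measurableSet_Iic]
  congr 1
  ext x
  simp only [mem_preimage, mem_Iic, mem_Ici]
  constructor <;> intro h <;> linarith

lemma gaussQ_eq_Ici (r : ℝ) : gaussQ r = (gaussianReal 0 1 (Ici r)).toReal := rfl

lemma std_Ioi_eq_Ici (r : ℝ) : gaussianReal 0 1 (Ioi r) = gaussianReal 0 1 (Ici r) := by
  apply le_antisymm (measure_mono Ioi_subset_Ici_self)
  calc gaussianReal 0 1 (Ici r) ≤ gaussianReal 0 1 (Ioi r) + gaussianReal 0 1 {r} := by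
        rw [← Ioi_union_left]; exact measure_union_le _ _
    _ = gaussianReal 0 1 (Ioi r) := by rw [std_singleton, add_zero]

lemma std_Iic_toReal (r : ℝ) : (gaussianReal 0 1 (Iic r)).toReal = 1 - gaussQ r := by
  have h : gaussianReal 0 1 (Iic r) + gaussianReal 0 1 (Ioi r) = 1 := by
    rw [← measure_union (Iic_disjoint_Ioi le_rfl) measurableSet_Ioi, Iic_union_Ioi, measure_univ]
  rw [std_Ioi_eq_Ici] at h
  have h1 := congrArg ENNReal.toReal h
  rw [ENNReal.toReal_add (measure_ne_top _ _) (measure_ne_top _ _), ENNReal.toReal_one] at h1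
  rw [gaussQ_eq_Ici]
  linarith

lemma gaussQ_nonneg (r : ℝ) : 0 ≤ gaussQ r := ENNReal.toReal_nonneg

lemma gaussQ_anti {r s : ℝ} (h : r ≤ s) : gaussQ s ≤ gaussQ r := by
  rw [gaussQ_eq_Ici, gaussQ_eq_Ici]
  apply ENNReal.toReal_mono (measure_ne_top _ _)
  exact measure_mono (Ici_subset_Ici.2 h)

lemma gaussQ_zero : gaussQ 0 = 1/2 := by
  have h := std_Iic_toReal 0
  have h2 : gaussianReal 0 1 (Iic 0) = gaussianReal 0 1 (Ici 0) := by
    have := std_Iic_neg 0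
    norm_num at this
    exact this
  rw [h2, ← gaussQ_eq_Ici] at h
  linarith

lemma gaussQ_le_half {r : ℝ} (hr : 0 ≤ r) : gaussQ r ≤ 1/2 := by
  rw [← gaussQ_zero]; exact gaussQ_anti hr

instance gaussianE_isProb (d : ℕ) (m : EuclideanSpace ℝ (Fin d)) (v : ℝ) :
    IsProbabilityMeasure (gaussianE d m v) :=
  Measure.isProbabilityMeasure_map (MeasurableEquiv.toLp 2 (Fin d → ℝ)).measurable.aemeasurable

lemma prob_split {α : Type*} [MeasurableSpace α] (ρ : Measure α) [IsFiniteMeasure ρ]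
    (A S : Set α) (hS : MeasurableSet S) :
    (ρ A).toReal = (ρ (A ∩ S)).toReal + (ρ (A \ S)).toReal := by
  rw [← ENNReal.toReal_add (measure_ne_top _ _) (measure_ne_top _ _), measure_inter_add_diff A hS]

lemma gpdf_anti {d : ℕ} {σ : ℝ} (hσ : 0 < σ) {b c : EuclideanSpace ℝ (Fin d)}
    (h : ‖b‖^2 ≤ ‖c‖^2) : gpdf d σ c ≤ gpdf d σ b := by
  apply ENNReal.ofReal_le_ofReal
  apply mul_le_mul_of_nonneg_left _ (by positivity)
  apply Real.exp_le_exp.2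
  have h2σ : (0:ℝ) < 2 * σ^2 := by positivity
  rw [div_le_div_iff₀ h2σ h2σ]
  nlinarith

lemma key_comparison (d : ℕ) (hd : 0 < d) {σ B : ℝ} (hσ : 0 < σ) (hB : 0 < B)
    {x y : EuclideanSpace ℝ (Fin d)}
    (hx : x ∈ Metric.closedBall (0 : EuclideanSpace ℝ (Fin d)) (B / 2))
    (hy : y ∈ Metric.closedBall (0 : EuclideanSpace ℝ (Fin d)) (B / 2))
    {A : Set (EuclideanSpace ℝ (Fin d))} (hA : MeasurableSet A) :
    ((gaussianE d 0 (σ^2)) ((fun z => x + z) ⁻¹' A)).toReal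
      - ((gaussianE d 0 (σ^2)) ((fun z => y + z) ⁻¹' A)).toReal
      ≤ 1 - 2 * gaussQ (B / (2 * σ)) := by
  have hQhalf : gaussQ (B / (2 * σ)) ≤ 1/2 := gaussQ_le_half (by positivity)
  set γ := gaussianE d 0 (σ^2) with hγ
  by_cases hxy : x = y
  · rw [hxy]; simp; linarith
  -- nondegenerate case
  have ha : 0 < ‖x - y‖ := by
    rw [norm_pos_iff, sub_ne_zero]; exact hxy
  set a : ℝ := ‖x - y‖ with haa
  set w := x - y with hw
  set u := a⁻¹ • w with hu
  have hun : ‖u‖ = 1 := by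
    rw [hu, norm_smul, norm_inv, Real.norm_eq_abs, abs_of_pos ha]
    field_simp
    exact haa.symm
  have hwu : ∀ z : EuclideanSpace ℝ (Fin d), ⟪z, w⟫ = a * ⟪z, u⟫ := by
    intro z
    rw [hu, real_inner_smul_right, ← mul_assoc, mul_inv_cancel₀ (ne_of_gt ha), one_mul]
  set S : Set (EuclideanSpace ℝ (Fin d)) := {z | 2 * ⟪z, w⟫ ≤ ‖x‖^2 - ‖y‖^2} with hSdef
  have hS : MeasurableSet S := ((inner_measurable d w).const_mul 2) measurableSet_Iic
  -- identities
  have hidx : ‖x‖^2 - ‖y‖^2 - 2 * ⟪x, w⟫ = -a^2 := by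
    have h1 : a^2 = ‖x‖^2 - 2*⟪x,y⟫ + ‖y‖^2 := by rw [haa, hw]; exact norm_sub_sq_real x y
    have h2 : ⟪x, w⟫ = ‖x‖^2 - ⟪x,y⟫ := by
      rw [hw, inner_sub_right, real_inner_self_eq_norm_sq]
    rw [h2]; linarith
  have hidy : ‖x‖^2 - ‖y‖^2 - 2 * ⟪y, w⟫ = a^2 := by
    have h1 : a^2 = ‖x‖^2 - 2*⟪x,y⟫ + ‖y‖^2 := by rw [haa, hw]; exact norm_sub_sq_real x y
    have h2 : ⟪y, w⟫ = ⟪x,y⟫ - ‖y‖^2 := by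
      rw [hw, inner_sub_right, real_inner_self_eq_norm_sq, real_inner_comm]
    rw [h2]; linarith
  -- preimage computations
  have hpreS_x : (fun z => x + z) ⁻¹' S = {z | ⟪z, u⟫ ≤ -(a/2)} := by
    ext z
    simp only [mem_preimage, hSdef, mem_setOf_eq, inner_add_left]
    rw [hwu z]
    constructor
    · intro h; nlinarith
    · intro h; nlinarith
  have hpreS_y : (fun z => y + z) ⁻¹' S = {z | ⟪z, u⟫ ≤ a/2} := by
    ext z
    simp only [mem_preimage, hSdef, mem_setOf_eq, inner_add_left]
    rw [hwu z]
    constructor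
    · intro h; nlinarith
    · intro h; nlinarith
  -- the two shifted measures
  set mx := γ.map (fun z => x + z) with hmx
  set my := γ.map (fun z => y + z) with hmy
  haveI : IsProbabilityMeasure γ := gaussianE_isProb d 0 (σ^2)
  haveI : IsProbabilityMeasure mx :=
    Measure.isProbabilityMeasure_map (measurable_const_add x).aemeasurable
  haveI : IsProbabilityMeasure my :=
    Measure.isProbabilityMeasure_map (measurable_const_add y).aemeasurable
  have hmxd : mx = volume.withDensity (fun z => gpdf d σ (-x + z)) := gaussianE_map_add d hσ x
  have hmyd : my = volume.withDensity (fun z => gpdf d σ (-y + z)) := gaussianE_map_add d hσ y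
  -- density comparison on S and on Sᶜ
  have hcomp : ∀ T ⊆ S, MeasurableSet T → mx T ≤ my T := by
    intro T hTS hT
    rw [hmxd, hmyd, withDensity_apply _ hT, withDensity_apply _ hT]
    apply setLIntegral_mono ((gpdf_measurable d σ).comp (measurable_const_add (-y)))
    intro z hz
    apply gpdf_anti hσ
    have hzS := hTS hz
    rw [hSdef, mem_setOf_eq] at hzS
    have e1 : ‖-y + z‖^2 = ‖z - y‖^2 := by rw [neg_add_eq_sub]
    have e2 : ‖-x + z‖^2 = ‖z - x‖^2 := by rw [neg_add_eq_sub]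
    rw [e1, e2, norm_sub_sq_real z x, norm_sub_sq_real z y]
    have h3 : ⟪z, w⟫ = ⟪z,x⟫ - ⟪z,y⟫ := by rw [hw, inner_sub_right]
    linarith [hzS, h3.symm.le]
  have hcomp' : ∀ T ⊆ Sᶜ, MeasurableSet T → my T ≤ mx T := by
    intro T hTS hT
    rw [hmxd, hmyd, withDensity_apply _ hT, withDensity_apply _ hT]
    apply setLIntegral_mono ((gpdf_measurable d σ).comp (measurable_const_add (-x)))
    intro z hz
    apply gpdf_anti hσ
    have hzS := hTS hz
    rw [mem_compl_iff, hSdef, mem_setOf_eq, not_le] at hzS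
    have e1 : ‖-y + z‖^2 = ‖z - y‖^2 := by rw [neg_add_eq_sub]
    have e2 : ‖-x + z‖^2 = ‖z - x‖^2 := by rw [neg_add_eq_sub]
    rw [e1, e2, norm_sub_sq_real z x, norm_sub_sq_real z y]
    have h3 : ⟪z, w⟫ = ⟪z,x⟫ - ⟪z,y⟫ := by rw [hw, inner_sub_right]
    nlinarith [hzS]
  -- measures of S under mx, my
  have hmxA : γ ((fun z => x + z) ⁻¹' A) = mx A := by
    rw [hmx, Measure.map_apply (measurable_const_add x) hA]
  have hmyA : γ ((fun z => y + z) ⁻¹' A) = my A := by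
    rw [hmy, Measure.map_apply (measurable_const_add y) hA]
  have hmxS : (mx S).toReal = gaussQ (a / (2*σ)) := by
    rw [hmx, Measure.map_apply (measurable_const_add x) hS, hpreS_x]
    have := gaussianE_halfspace d hd hσ u hun (-(a/2))
    rw [← hγ] at this
    rw [show {z : EuclideanSpace ℝ (Fin d) | ⟪z, u⟫ ≤ -(a/2)} = {z | ⟪z, u⟫ ≤ -(a/2)} from rfl,
      this, show -(a/2)/σ = -(a/(2*σ)) by ring, std_Iic_neg, ← gaussQ_eq_Ici]
  have hmyS : (my S).toReal = 1 - gaussQ (a / (2*σ)) := by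
    rw [hmy, Measure.map_apply (measurable_const_add y) hS, hpreS_y]
    have := gaussianE_halfspace d hd hσ u hun (a/2)
    rw [← hγ] at this
    rw [this, show a/2/σ = a/(2*σ) by ring, std_Iic_toReal]
  -- assemble
  rw [hmxA, hmyA]
  have split1x := prob_split mx A S hS
  have split1y := prob_split my A S hS
  have split2x := prob_split mx Sᶜ A hA
  have split2y := prob_split my Sᶜ A hA
  have hcS : (mx Sᶜ).toReal = 1 - (mx S).toReal := by
    rw [measure_compl hS (measure_ne_top _ _), measure_univ,
      ENNReal.toReal_sub_of_le prob_le_one ENNReal.one_ne_top]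
    simp
  have hcS' : (my Sᶜ).toReal = 1 - (my S).toReal := by
    rw [measure_compl hS (measure_ne_top _ _), measure_univ,
      ENNReal.toReal_sub_of_le prob_le_one ENNReal.one_ne_top]
    simp
  have t1 : (mx (A ∩ S)).toReal ≤ (my (A ∩ S)).toReal :=
    ENNReal.toReal_mono (measure_ne_top _ _) (hcomp _ inter_subset_right (hA.inter hS))
  have t2 : (my (Sᶜ \ A)).toReal ≤ (mx (Sᶜ \ A)).toReal :=
    ENNReal.toReal_mono (measure_ne_top _ _) (hcomp' _ diff_subset (hS.compl.diff hA))
  have hAdS : A \ S = Sᶜ ∩ A := by ext z; simp [mem_diff]; tauto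
  have habB : a ≤ B := by
    have hx' : ‖x‖ ≤ B/2 := by simpa [dist_zero_right] using Metric.mem_closedBall.1 hx
    have hy' : ‖y‖ ≤ B/2 := by simpa [dist_zero_right] using Metric.mem_closedBall.1 hy
    calc a = ‖x - y‖ := haa
      _ ≤ ‖x‖ + ‖y‖ := norm_sub_le x y
      _ ≤ B := by linarith
  have hQa : gaussQ (B / (2*σ)) ≤ gaussQ (a / (2*σ)) := by
    apply gaussQ_anti
    exact div_le_div_of_nonneg_right habB (by positivity)
  have ex : (mx (A \ S)).toReal = (mx (Sᶜ ∩ A)).toReal := by rw [hAdS]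
  have ey : (my (A \ S)).toReal = (my (Sᶜ ∩ A)).toReal := by rw [hAdS]
  linarith [split1x, split1y, split2x, split2y, t1, t2, hmxS, hmyS, hcS, hcS', ex, ey, hQa]

/-- One Restart iteration contracts TV: adding Gaussian noise `N(0, σ²I_d)` and mapping through
any Borel `f` contracts total variation by `1 − 2Q(B/(2σ))` for measures supported in the ball
of radius `B/2`. -/
theorem tvDist_map_conv_le (d : ℕ) (hd : 1 ≤ d) (σ B : ℝ) (hσ : 0 < σ) (hB : 0 < B)
    (f : EuclideanSpace ℝ (Fin d) → EuclideanSpace ℝ (Fin d)) (hf : Measurable f)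
    (μ ν : Measure (EuclideanSpace ℝ (Fin d)))
    [IsProbabilityMeasure μ] [IsProbabilityMeasure ν]
    (hμ : μ (Metric.closedBall 0 (B / 2))ᶜ = 0)
    (hν : ν (Metric.closedBall 0 (B / 2))ᶜ = 0) :
    tvDist ((μ.conv (gaussianE d 0 (σ ^ 2))).map f) ((ν.conv (gaussianE d 0 (σ ^ 2))).map f) ≤
      (1 - 2 * gaussQ (B / (2 * σ))) * tvDist μ ν := by
  classical
  set γ := gaussianE d 0 (σ ^ 2) with hγ
  haveI : IsProbabilityMeasure γ := gaussianE_isProb d 0 (σ^2)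
  set K := Metric.closedBall (0 : EuclideanSpace ℝ (Fin d)) (B / 2) with hK
  set c := 1 - 2 * gaussQ (B / (2 * σ)) with hc
  have hc0 : 0 ≤ c := by
    have : gaussQ (B / (2*σ)) ≤ 1/2 := gaussQ_le_half (by positivity)
    rw [hc]; linarith
  -- Hahn decomposition
  obtain ⟨E₀, hE₀m, hE₀1, hE₀2⟩ := hahn_decomposition (μ := μ) (ν := ν)
  set m : ℝ := (μ E₀).toReal - (ν E₀).toReal with hm
  have hνμE₀ : ν E₀ ≤ μ E₀ := hE₀1 E₀ hE₀m subset_rfl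
  have hm0 : 0 ≤ m := by
    rw [hm, sub_nonneg]
    exact ENNReal.toReal_mono (measure_ne_top _ _) hνμE₀
  -- tvDist bounds
  have hbdd : ∀ (P Q : Measure (EuclideanSpace ℝ (Fin d))) [IsProbabilityMeasure P]
      [IsProbabilityMeasure Q], BddAbove (range fun s : {s : Set (EuclideanSpace ℝ (Fin d)) //
        MeasurableSet s} => |(P s.1).toReal - (Q s.1).toReal|) := by
    intro P Q _ _
    refine ⟨1, ?_⟩
    rintro r ⟨s, rfl⟩
    have h1 : (P s.1).toReal ≤ 1 := by
      rw [show (1:ℝ) = (1:ℝ≥0∞).toReal by simp]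
      exact ENNReal.toReal_mono ENNReal.one_ne_top prob_le_one
    have h2 : (Q s.1).toReal ≤ 1 := by
      rw [show (1:ℝ) = (1:ℝ≥0∞).toReal by simp]
      exact ENNReal.toReal_mono ENNReal.one_ne_top prob_le_one
    have h3 : 0 ≤ (P s.1).toReal := ENNReal.toReal_nonneg
    have h4 : 0 ≤ (Q s.1).toReal := ENNReal.toReal_nonneg
    rw [abs_le]
    constructor <;> linarith
  have hmtv : m ≤ tvDist μ ν := by
    have := le_ciSup (hbdd μ ν) (⟨E₀, hE₀m⟩ : {s : Set (EuclideanSpace ℝ (Fin d)) //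
      MeasurableSet s})
    refine le_trans (le_abs_self m) this
  -- restricted measure comparisons
  have hres1 : ν.restrict E₀ ≤ μ.restrict E₀ := by
    refine Measure.le_iff.2 fun t ht => ?_
    rw [Measure.restrict_apply ht, Measure.restrict_apply ht]
    exact hE₀1 _ (ht.inter hE₀m) inter_subset_right
  have hres2 : μ.restrict E₀ᶜ ≤ ν.restrict E₀ᶜ := by
    refine Measure.le_iff.2 fun t ht => ?_
    rw [Measure.restrict_apply ht, Measure.restrict_apply ht]
    exact hE₀2 _ (ht.inter hE₀m.compl) inter_subset_right
  set τ : Measure (EuclideanSpace ℝ (Fin d)) := μ.restrict E₀ - ν.restrict E₀ with hτ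
  set ρ : Measure (EuclideanSpace ℝ (Fin d)) := ν.restrict E₀ᶜ - μ.restrict E₀ᶜ with hρ
  have hτle : τ ≤ μ := Measure.sub_le.trans Measure.restrict_le_self
  have hρle : ρ ≤ ν := Measure.sub_le.trans Measure.restrict_le_self
  haveI : IsFiniteMeasure τ := ⟨lt_of_le_of_lt (Measure.le_iff'.1 hτle univ)
    (measure_lt_top μ univ)⟩
  haveI : IsFiniteMeasure ρ := ⟨lt_of_le_of_lt (Measure.le_iff'.1 hρle univ)
    (measure_lt_top ν univ)⟩
  have hτuniv : (τ univ).toReal = m := by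
    rw [hτ, Measure.sub_apply MeasurableSet.univ hres1, Measure.restrict_apply_univ,
      Measure.restrict_apply_univ,
      ENNReal.toReal_sub_of_le hνμE₀ (measure_ne_top _ _), hm]
  have hcompl : ∀ (P : Measure (EuclideanSpace ℝ (Fin d))) [IsProbabilityMeasure P],
      (P E₀ᶜ).toReal = 1 - (P E₀).toReal := by
    intro P _
    rw [measure_compl hE₀m (measure_ne_top _ _), measure_univ,
      ENNReal.toReal_sub_of_le prob_le_one ENNReal.one_ne_top]
    simp
  have hμνE₀c : μ E₀ᶜ ≤ ν E₀ᶜ := hE₀2 E₀ᶜ hE₀m.compl subset_rfl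
  have hρuniv : (ρ univ).toReal = m := by
    rw [hρ, Measure.sub_apply MeasurableSet.univ hres2, Measure.restrict_apply_univ,
      Measure.restrict_apply_univ,
      ENNReal.toReal_sub_of_le hμνE₀c (measure_ne_top _ _), hcompl μ, hcompl ν, hm]
    ring
  -- τ and ρ live on K
  have hτK : τ Kᶜ = 0 :=
    le_antisymm (le_trans (Measure.le_iff'.1 hτle Kᶜ) (le_of_eq hμ)) zero_le
  have hρK : ρ Kᶜ = 0 :=
    le_antisymm (le_trans (Measure.le_iff'.1 hρle Kᶜ) (le_of_eq hν)) zero_le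
  have hτae : ∀ᵐ z ∂τ, z ∈ K := by
    rw [ae_iff]
    convert hτK using 2
    rfl
  have hρae : ∀ᵐ z ∂ρ, z ∈ K := by
    rw [ae_iff]
    convert hρK using 2
    rfl
  -- K is nonempty
  have hKne : K.Nonempty := ⟨0, Metric.mem_closedBall_self (by positivity)⟩
  -- main per-set bound
  have hmain : ∀ s : Set (EuclideanSpace ℝ (Fin d)), MeasurableSet s →
      |(((μ.conv γ).map f) s).toReal - (((ν.conv γ).map f) s).toReal| ≤ c * m := by
    intro s hs
    set A := f ⁻¹' s with hA
    have hAm : MeasurableSet A := hf hs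
    have hT2 : MeasurableSet ((fun p : EuclideanSpace ℝ (Fin d) × EuclideanSpace ℝ (Fin d) =>
        p.1 + p.2) ⁻¹' A) := (measurable_fst.add measurable_snd) hAm
    set G : EuclideanSpace ℝ (Fin d) → ℝ≥0∞ := fun x => γ ((fun z => x + z) ⁻¹' A) with hG
    have hGmeas : Measurable G := by
      have := measurable_measure_prodMk_left (ν := γ) hT2
      exact this
    have hGle : ∀ x, G x ≤ 1 := fun x => prob_le_one
    set g : EuclideanSpace ℝ (Fin d) → ℝ := fun x => (G x).toReal with hg
    have hgmeas : Measurable g := hGmeas.ennreal_toReal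
    have hg01 : ∀ x, 0 ≤ g x ∧ g x ≤ 1 := by
      intro x
      refine ⟨ENNReal.toReal_nonneg, ?_⟩
      rw [show (1:ℝ) = (1:ℝ≥0∞).toReal by simp]
      exact ENNReal.toReal_mono ENNReal.one_ne_top (hGle x)
    have hgint : ∀ (P : Measure (EuclideanSpace ℝ (Fin d))) [IsFiniteMeasure P],
        Integrable g P := by
      intro P _
      refine Integrable.mono' (integrable_const 1) hgmeas.aestronglyMeasurable ?_
      filter_upwards with x
      rw [Real.norm_eq_abs, abs_of_nonneg (hg01 x).1]
      exact (hg01 x).2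
    -- conv formula
    have hconv : ∀ (P : Measure (EuclideanSpace ℝ (Fin d))) [IsProbabilityMeasure P],
        (((P.conv γ).map f) s).toReal = ∫ x, g x ∂P := by
      intro P _
      rw [Measure.map_apply hf hs]
      have h1 : (P.conv γ) A = ∫⁻ x, G x ∂P := by
        rw [Measure.conv, Measure.map_apply (by fun_prop : Measurable fun x : EuclideanSpace ℝ (Fin d) × EuclideanSpace ℝ (Fin d) => x.1 + x.2) hAm,
          Measure.prod_apply hT2]
        rfl
      rw [← hA, h1, ← integral_toReal hGmeas.aemeasurable
        (ae_of_all _ fun x => lt_of_le_of_lt (hGle x) ENNReal.one_lt_top)]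
    -- oscillation bound
    set I := sInf (g '' K) with hI
    have hbddbelow : BddBelow (g '' K) := ⟨0, by rintro _ ⟨t, ht, rfl⟩; exact (hg01 t).1⟩
    have hIle : ∀ z ∈ K, I ≤ g z := fun z hz => csInf_le hbddbelow ⟨z, hz, rfl⟩
    have hkey : ∀ z ∈ K, ∀ t ∈ K, g z - g t ≤ c := by
      intro z hz t ht
      have := key_comparison d (lt_of_lt_of_le Nat.zero_lt_one hd) hσ hB hz ht hAm
      rw [← hγ] at this
      exact this
    have hub : ∀ z ∈ K, g z ≤ I + c := by
      intro z hz
      have : g z - c ≤ I := by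
        apply le_csInf (hKne.image g)
        rintro _ ⟨t, ht, rfl⟩
        linarith [hkey z hz t ht]
      linarith
    -- integral bounds for τ and ρ
    have hbound : ∀ (P : Measure (EuclideanSpace ℝ (Fin d))) [IsFiniteMeasure P],
        (∀ᵐ z ∂P, z ∈ K) → I * (P univ).toReal ≤ ∫ z, g z ∂P ∧
          ∫ z, g z ∂P ≤ (I + c) * (P univ).toReal := by
      intro P _ hPae
      constructor
      · have h1 : ∫ (_ : EuclideanSpace ℝ (Fin d)), I ∂P ≤ ∫ z, g z ∂P := by
          refine integral_mono_ae (integrable_const I) (hgint P) ?_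
          filter_upwards [hPae] with z hz
          exact hIle z hz
        rwa [integral_const, smul_eq_mul, mul_comm] at h1
      · have h2 : ∫ z, g z ∂P ≤ ∫ (_ : EuclideanSpace ℝ (Fin d)), (I + c) ∂P := by
          refine integral_mono_ae (hgint P) (integrable_const (I + c)) ?_
          filter_upwards [hPae] with z hz
          exact hub z hz
        rwa [integral_const, smul_eq_mul, mul_comm] at h2
    obtain ⟨hτlo, hτhi⟩ := hbound τ hτae
    obtain ⟨hρlo, hρhi⟩ := hbound ρ hρae
    -- decomposition of integrals
    have haddτ : ∫ z, g z ∂(μ.restrict E₀) = ∫ z, g z ∂τ + ∫ z, g z ∂(ν.restrict E₀) := by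
      rw [← integral_add_measure (hgint τ) (hgint (ν.restrict E₀)),
        Measure.sub_add_cancel_of_le hres1]
    have haddρ : ∫ z, g z ∂(ν.restrict E₀ᶜ) = ∫ z, g z ∂ρ + ∫ z, g z ∂(μ.restrict E₀ᶜ) := by
      rw [← integral_add_measure (hgint ρ) (hgint (μ.restrict E₀ᶜ)),
        Measure.sub_add_cancel_of_le hres2]
    have hsplitμ : ∫ z, g z ∂μ = ∫ z, g z ∂(μ.restrict E₀) + ∫ z, g z ∂(μ.restrict E₀ᶜ) := by
      rw [← integral_add_compl hE₀m (hgint μ)]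
    have hsplitν : ∫ z, g z ∂ν = ∫ z, g z ∂(ν.restrict E₀) + ∫ z, g z ∂(ν.restrict E₀ᶜ) := by
      rw [← integral_add_compl hE₀m (hgint ν)]
    have hdiff : ∫ z, g z ∂μ - ∫ z, g z ∂ν = ∫ z, g z ∂τ - ∫ z, g z ∂ρ := by
      rw [hsplitμ, hsplitν, haddτ, haddρ]
      ring
    rw [hconv μ, hconv ν, hdiff, abs_le]
    rw [hτuniv] at hτlo hτhi
    rw [hρuniv] at hρlo hρhi
    constructor <;> nlinarith
  -- conclude via ciSup_le
  haveI : IsProbabilityMeasure ((μ.conv γ).map f) := by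
    refine Measure.isProbabilityMeasure_map hf.aemeasurable
  haveI : IsProbabilityMeasure ((ν.conv γ).map f) := by
    refine Measure.isProbabilityMeasure_map hf.aemeasurable
  rw [tvDist]
  refine ciSup_le fun ⟨s, hs⟩ => ?_
  calc |(((μ.conv γ).map f) s).toReal - (((ν.conv γ).map f) s).toReal| ≤ c * m := hmain s hs
    _ ≤ c * tvDist μ ν := mul_le_mul_of_nonneg_left hmtv hc0
end
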